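/- Let D be an integral domain with quotient field K and let ⋆ be a semistar operation of D. Then: (1) ⋏^{⋆_f} is a semistar operation of D[X] of finite type, and consequently ⋏^{⋆_f} = (⋏^{⋆_f})_f ≤ (⋏^⋆)_f ≤ (▲^⋆)_f; (2) ⋏^{tilde⋆} is a stable semistar operation of D[X] of finite type, and consequently ⋏^{tilde⋆} = tilde(⋏^{tilde⋆}) ≤ tilde(⋏^⋆) ≤ tilde(▲^⋆). -/

import Mathlib

/- Preliminaries: semistar operations on an integral domain `R` with quotient field `F`
(submodules of `F` over `R`), polynomial extension of semistar operations from `D`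
to `D[X]` (viewed inside the quotient field `K(X) = RatFunc K` of `D[X]`). -/

open Polynomial Pointwise

set_option synthInstance.maxHeartbeats 1000000
set_option maxHeartbeats 1000000

open scoped Classical

noncomputable section

section Generic

variable (R F : Type*) [CommRing R] [Field F] [Algebra R F]

/-- `o` is a semistar operation of `R` (on the nonzero `R`-submodules of the
quotient field `F`). -/
def IsSemistarOp (o : Submodule R F → Submodule R F) : Prop :=
  (∀ x : F, x ≠ 0 → ∀ E : Submodule R F, E ≠ ⊥ → o (x • E) = x • o E) ∧
  (∀ E G : Submodule R F, E ≠ ⊥ → G ≠ ⊥ → E ≤ G → o E ≤ o G) ∧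
  (∀ E : Submodule R F, E ≠ ⊥ → E ≤ o E) ∧
  (∀ E : Submodule R F, E ≠ ⊥ → o (o E) = o E)

/-- The finite-type operation `⋆_f` associated to `⋆`:
`E^{⋆_f} = ⋃ { G^⋆ : G nonzero finitely generated, G ⊆ E }`. -/
def finTypeFun (o : Submodule R F → Submodule R F) : Submodule R F → Submodule R F :=
  fun E => ⨆ (G : Submodule R F) (_ : G ≠ ⊥) (_ : G.FG) (_ : G ≤ E), o G

/-- `⋆` is of finite type, i.e. `⋆ = ⋆_f`. -/
def IsFiniteTypeFun (o : Submodule R F → Submodule R F) : Prop :=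
  ∀ E : Submodule R F, E ≠ ⊥ → o E = finTypeFun R F o E

/-- `⋆` is stable: `(E ∩ G)^⋆ = E^⋆ ∩ G^⋆`. -/
def IsStableFun (o : Submodule R F → Submodule R F) : Prop :=
  ∀ E G : Submodule R F, E ≠ ⊥ → G ≠ ⊥ → o (E ⊓ G) = o E ⊓ o G

/-- An ideal of `R` viewed as an `R`-submodule of `F`. -/
def idealSub (J : Ideal R) : Submodule R F := Submodule.map (Algebra.linearMap R F) J

/-- `(E : J) = { x ∈ F : xJ ⊆ E }` for an ideal `J` of `R`. -/
def colonIdeal (E : Submodule R F) (J : Ideal R) : Submodule R F where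
  carrier := { x : F | ∀ a ∈ J, a • x ∈ E }
  add_mem' := fun {x y} hx hy a ha => by
    simpa [smul_add] using E.add_mem (hx a ha) (hy a ha)
  zero_mem' := fun a _ => by simpa using E.zero_mem
  smul_mem' := fun r x hx a ha => by
    rw [← mul_smul, mul_comm, mul_smul]
    exact E.smul_mem r (hx a ha)

/-- The stable finite-type operation `tilde ⋆` associated to `⋆`:
`E^{tilde ⋆} = ⋃ { (E : J) : J nonzero finitely generated integral ideal with J^⋆ = R^⋆ }`. -/
def tildeFun (o : Submodule R F → Submodule R F) : Submodule R F → Submodule R F :=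
  fun E => ⨆ (J : Ideal R) (_ : J ≠ ⊥) (_ : J.FG)
    (_ : o (idealSub R F J) = o (1 : Submodule R F)), colonIdeal R F E J

/-- The `v`-operation: `E^v = (R : (R : E))` for `E` a nonzero fractional ideal,
and `E^v = F` otherwise. -/
def vFun : Submodule R F → Submodule R F := fun E =>
  if ∃ d : R, d ≠ 0 ∧ ∀ x ∈ E, d • x ∈ (1 : Submodule R F) then
    (1 : Submodule R F) / ((1 : Submodule R F) / E)
  else ⊤

/-- The `eab` operation `⋆_a` associated to `⋆`. -/
def aFun (o : Submodule R F → Submodule R F) : Submodule R F → Submodule R F := fun E =>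
  ⨆ (G : Submodule R F) (_ : G ≠ ⊥) (_ : G.FG) (_ : G ≤ E),
    ⨆ (H : Submodule R F) (_ : H ≠ ⊥) (_ : H.FG), o (G * H) / o H

/-- `I` is a quasi-`⋆`-ideal: a nonzero integral ideal with `I^⋆ ∩ R = I`. -/
def isQuasiIdealFun (o : Submodule R F → Submodule R F) (I : Ideal R) : Prop :=
  I ≠ ⊥ ∧ (o (idealSub R F I)).comap (Algebra.linearMap R F) = I

/-- `I` is a quasi-`⋆`-maximal ideal: maximal among proper quasi-`⋆`-ideals. -/
def isQuasiMaximalFun (o : Submodule R F → Submodule R F) (I : Ideal R) : Prop :=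
  isQuasiIdealFun R F o I ∧ I ≠ ⊤ ∧
    ∀ J : Ideal R, isQuasiIdealFun R F o J → J ≠ ⊤ → I ≤ J → I = J

/-- The `v`-operation relative to an overring `R'` (an `R`-submodule of `F`):
`B ↦ (R' : (R' : B))` for `B` a nonzero fractional ideal of `R'`, `F` otherwise. -/
def vRelFun (R' B : Submodule R F) : Submodule R F :=
  if ∃ z ∈ R', z ≠ 0 ∧ ∀ x ∈ B, z * x ∈ R' then R' / (R' / B) else ⊤

/-- The `t`-operation relative to an overring `R'`: finite-type operation associated to
the `v`-operation of `R'` (the union being over nonzero finitely generated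
`R'`-submodules contained in `B`). -/
def tRelFun (R' B : Submodule R F) : Submodule R F :=
  ⨆ (G : Submodule R F) (_ : G ≠ ⊥)
    (_ : ∃ S : Finset F, G = R' * Submodule.span R (S : Set F)) (_ : G ≤ B),
    vRelFun R F R' G

end Generic

section Poly

variable (D K : Type*) [CommRing D] [IsDomain D] [Field K] [Algebra D K] [IsFractionRing D K]

/-- The canonical ring homomorphism `D[X] → K(X)`. -/
def polyToRF : Polynomial D →+* RatFunc K :=
  (algebraMap (Polynomial K) (RatFunc K)).comp (Polynomial.mapRingHom (algebraMap D K))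

/-- `K(X)` is an algebra over `D[X]`; in fact it is the quotient field of `D[X]`. -/
instance (priority := 100) : Algebra (Polynomial D) (RatFunc K) := (polyToRF D K).toAlgebra

/-- For a `D`-submodule `E` of `K`, the `D[X]`-submodule `E[X]` of `K(X)`:
polynomials all of whose coefficients lie in `E`. -/
def polyExt (E : Submodule D K) : Submodule (Polynomial D) (RatFunc K) where
  carrier := { f : RatFunc K | ∃ p : Polynomial K, (∀ n, p.coeff n ∈ E) ∧
      f = algebraMap (Polynomial K) (RatFunc K) p }
  add_mem' := by
    rintro f g ⟨p, hp, rfl⟩ ⟨q, hq, rfl⟩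
    exact ⟨p + q, fun n => by simpa using E.add_mem (hp n) (hq n), by simp⟩
  zero_mem' := ⟨0, fun n => by simpa using E.zero_mem, by simp⟩
  smul_mem' := by
    rintro c f ⟨p, hp, rfl⟩
    refine ⟨Polynomial.map (algebraMap D K) c * p, fun n => ?_, ?_⟩
    · rw [Polynomial.coeff_mul]
      refine Submodule.sum_mem E fun ij _ => ?_
      rw [Polynomial.coeff_map, ← Algebra.smul_def]
      exact E.smul_mem _ (hp ij.2)
    · rw [Algebra.smul_def, RingHom.algebraMap_toAlgebra, map_mul]
      unfold polyToRF
      simp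

/-- The contraction `B ∩ K` of a `D[X]`-submodule `B` of `K(X)` to a `D`-submodule of `K`. -/
def contractToBase (B : Submodule (Polynomial D) (RatFunc K)) : Submodule D K where
  carrier := { x : K | algebraMap K (RatFunc K) x ∈ B }
  add_mem' := fun {x y} hx hy => by
    simpa [Set.mem_setOf_eq, map_add] using B.add_mem hx hy
  zero_mem' := by simpa using B.zero_mem
  smul_mem' := fun d x hx => by
    have h : algebraMap K (RatFunc K) (d • x)
        = (Polynomial.C d : Polynomial D) • (algebraMap K (RatFunc K) x) := by
      rw [Algebra.smul_def d x, map_mul, Algebra.smul_def, RingHom.algebraMap_toAlgebra]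
      unfold polyToRF
      simp only [RingHom.coe_comp, Function.comp_apply, Polynomial.coe_mapRingHom,
        Polynomial.map_C, RatFunc.algebraMap_C, RatFunc.algebraMap_eq_C]
    show algebraMap K (RatFunc K) (d • x) ∈ B
    rw [h]
    exact B.smul_mem (Polynomial.C d) hx

/-- The content `c_D(S)`: the `D`-submodule of `K` generated by the coefficients of all
polynomials belonging to `S`. -/
def contentOf (S : Set (RatFunc K)) : Submodule D K :=
  Submodule.span D { x : K | ∃ p : Polynomial K,
    algebraMap (Polynomial K) (RatFunc K) p ∈ S ∧ ∃ n, p.coeff n = x }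

/-- The semistar operation `▲^⋆_T` of `D[X]` associated to a semistar operation `⋆` of `D`
and an overring `T` of `D`:
`A ↦ ⋂ { z⁻¹ (c_D(zA))^⋆[X] : z ∈ (T[X] : A), z ≠ 0 }` if `(T[X] : A) ≠ 0`, else `A ↦ K(X)`. -/
def bigTriT (o : Submodule D K → Submodule D K) (T : Subalgebra D K) :
    Submodule (Polynomial D) (RatFunc K) → Submodule (Polynomial D) (RatFunc K) := fun A =>
  if ∃ z : RatFunc K, z ≠ 0 ∧ ∀ a ∈ A, z * a ∈ polyExt D K (Subalgebra.toSubmodule T) then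
    ⨅ (z : RatFunc K) (_ : z ≠ 0) (_ : ∀ a ∈ A, z * a ∈ polyExt D K (Subalgebra.toSubmodule T)),
      z⁻¹ • polyExt D K (o (contentOf D K (z • (A : Set (RatFunc K)))))
  else ⊤

/-- `▲^⋆ := ▲^⋆_K`, the largest strict extension of `⋆` to `D[X]`. -/
def bigTri (o : Submodule D K → Submodule D K) :
    Submodule (Polynomial D) (RatFunc K) → Submodule (Polynomial D) (RatFunc K) :=
  bigTriT D K o ⊤

/-- `b` is an extension of `⋆` to `D[X]` : `E^⋆ = (E[X])^b ∩ K`. -/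
def IsExtensionFun (o : Submodule D K → Submodule D K)
    (b : Submodule (Polynomial D) (RatFunc K) → Submodule (Polynomial D) (RatFunc K)) : Prop :=
  ∀ E : Submodule D K, E ≠ ⊥ → o E = contractToBase D K (b (polyExt D K E))

/-- `b` is a strict extension of `⋆` to `D[X]` : `(E[X])^b = E^⋆[X]`. -/
def IsStrictExtensionFun (o : Submodule D K → Submodule D K)
    (b : Submodule (Polynomial D) (RatFunc K) → Submodule (Polynomial D) (RatFunc K)) : Prop :=
  ∀ E : Submodule D K, E ≠ ⊥ → b (polyExt D K E) = polyExt D K (o E)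

/-- `⋏^⋆ : A ↦ ⋂ { A^★ : ★ a semistar operation of D[X] extending ⋆ }`. -/
def curlyFun (o : Submodule D K → Submodule D K) :
    Submodule (Polynomial D) (RatFunc K) → Submodule (Polynomial D) (RatFunc K) := fun A =>
  ⨅ (b : Submodule (Polynomial D) (RatFunc K) → Submodule (Polynomial D) (RatFunc K))
    (_ : IsSemistarOp (Polynomial D) (RatFunc K) b) (_ : IsExtensionFun D K o b), b A

/-- The localization `D_Q` of `D` at a prime ideal `Q`, as a `D`-submodule of `K`. -/
def locSub (Q : Ideal D) : Submodule D K :=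
  Submodule.span D { x : K | ∃ s : D, s ∉ Q ∧ s • x ∈ (1 : Submodule D K) }

/-- The content of an ideal `I` of `D[X]`: the `D`-submodule of `K` generated by the
coefficients of the polynomials in `I`. -/
def contentOfIdeal (I : Ideal (Polynomial D)) : Submodule D K :=
  Submodule.span D { x : K | ∃ p ∈ I, ∃ n, algebraMap D K (Polynomial.coeff p n) = x }

/-- The Nagata ring `D_Q(X)`, as a subset of `K(X)`: fractions `f/g` with
`f, g ∈ D_Q[X]` and the coefficients of `g` generating the unit ideal of `D_Q`. -/
def nagataSet (Q : Ideal D) : Set (RatFunc K) :=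
  { u : RatFunc K | ∃ g : Polynomial K, (∀ n, g.coeff n ∈ locSub D K Q) ∧
      locSub D K Q * Submodule.span D { x : K | ∃ n, g.coeff n = x } = locSub D K Q ∧
      u * algebraMap (Polynomial K) (RatFunc K) g ∈ polyExt D K (locSub D K Q) }

end Poly

/-!
Both parts rest on the minimality of `⋏^⋆` among the semistar operations of `D[X]` extending `⋆`
(this family is nonempty: `▲^⋆` belongs to it) and on two transfer facts: if `★` extends `⋆`,
then `★_f` extends `⋆_f` and `tilde ★` extends `tilde ⋆`. The first holds because a finitely
generated submodule of `E[X]` lies in `F[X]` for a finitely generated `F ⊆ E`; the second because a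
finitely generated ideal `J` of `D[X]` lies in `c(J)[X]`, and `(E[X] : J) ∩ K ⊆ (E : c(J))`, where
`c(J)` is the ideal generated by the coefficients of generators of `J`.

Since `(⋆_f)_f = ⋆_f` and `tilde (tilde ⋆) = tilde ⋆`, minimality gives `⋏^{⋆_f} ≤ (⋏^{⋆_f})_f` and
`⋏^{tilde ⋆} ≤ tilde (⋏^{tilde ⋆})`, and the reverse inequalities hold for every semistar operation.
Operations of the form `tilde ★` are stable and of finite type, so `⋏^{tilde ⋆}` is too (nonzero
submodules of `K(X)` meet nontrivially, so stability passes along the equality on nonzero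
submodules). The remaining inequalities follow from `⋏^{tilde ⋆} ≤ ⋏^⋆ ≤ ▲^⋆` and the monotonicity
of `★ ↦ ★_f` and `★ ↦ tilde ★`.
-/

namespace Submodule

variable {α R M : Type*} [Semiring R] [AddCommMonoid M] [Module R M] [GroupWithZero α]
  [DistribMulAction α M] [SMulCommClass α R M] {a : α}

theorem mem_pointwise_smul_iff_inv_smul_mem₀ (ha : a ≠ 0) (S : Submodule R M) (m : M) :
    m ∈ a • S ↔ a⁻¹ • m ∈ S := by
  rw [← SetLike.mem_coe, coe_pointwise_smul, Set.mem_smul_set_iff_inv_smul_mem₀ ha, SetLike.mem_coe]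

theorem pointwise_smul_le_iff₀ (ha : a ≠ 0) {S T : Submodule R M} : a • S ≤ T ↔ S ≤ a⁻¹ • T := by
  simp only [← SetLike.coe_subset_coe, coe_pointwise_smul]
  exact Set.smul_set_subset_iff₀ ha

theorem pointwise_smul_ne_bot₀ (ha : a ≠ 0) {S : Submodule R M} (hS : S ≠ ⊥) : a • S ≠ ⊥ :=
  fun h => hS (by rw [← inv_smul_smul₀ ha S, h, smul_bot'])

theorem pointwise_smul_iInf₀ (ha : a ≠ 0) {ι : Sort*} (S : ι → Submodule R M) :
    a • ⨅ i, S i = ⨅ i, a • S i := by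
  refine le_antisymm (le_iInf fun i => smul_le_smul_left a (iInf_le S i)) ?_
  refine (smul_inv_smul₀ ha _).symm.le.trans (smul_le_smul_left a (le_iInf fun i => ?_))
  exact (smul_le_smul_left a⁻¹ (iInf_le _ i)).trans_eq (inv_smul_smul₀ ha _)

end Submodule

theorem Submodule.FG.pointwise_smul {α R M : Type*} [Semiring R] [AddCommMonoid M] [Module R M]
    [Monoid α] [DistribMulAction α M] [SMulCommClass α R M] {S : Submodule R M} (hS : S.FG)
    (a : α) : (a • S).FG := by
  rw [Submodule.pointwise_smul_def]
  exact hS.map _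

theorem Submodule.FG.exists_le_of_le_iSup {R M : Type*} [Semiring R] [AddCommMonoid M]
    [Module R M] {ι : Sort*} [Nonempty ι] {S : ι → Submodule R M} (hS : Directed (· ≤ ·) S)
    {G : Submodule R M} (hG : G.FG) (hle : G ≤ ⨆ i, S i) : ∃ i, G ≤ S i := by
  obtain ⟨_, ⟨i, rfl⟩, hi⟩ := (CompleteLattice.isCompactElement_iff_le_of_directed_sSup_le _ _).1
    ((Submodule.fg_iff_compact G).1 hG) _ (Set.range_nonempty S) hS.directedOn_range
    (by rwa [sSup_range])
  exact ⟨i, hi⟩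

theorem Submodule.nonempty_fg_le_of_ne_bot {R M : Type*} [Semiring R] [AddCommMonoid M]
    [Module R M] {E : Submodule R M} (hE : E ≠ ⊥) :
    Nonempty {G : Submodule R M // G ≠ ⊥ ∧ G.FG ∧ G ≤ E} := by
  obtain ⟨b, hb, hb0⟩ := Submodule.exists_mem_ne_zero_of_ne_bot hE
  exact ⟨⟨_, by simpa using hb0, Submodule.fg_span_singleton b,
    (Submodule.span_singleton_le_iff_mem _ _).2 hb⟩⟩

theorem Submodule.one_ne_bot {R A : Type*} [CommSemiring R] [Semiring A] [Algebra R A]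
    [Nontrivial A] : (1 : Submodule R A) ≠ ⊥ :=
  (Submodule.ne_bot_iff _).2 ⟨1, Submodule.mem_one.2 ⟨1, map_one _⟩, one_ne_zero⟩

theorem Submodule.mul_ne_bot {R A : Type*} [CommSemiring R] [Semiring A] [Algebra R A]
    [NoZeroDivisors A] {M N : Submodule R A} (hM : M ≠ ⊥) (hN : N ≠ ⊥) : M * N ≠ ⊥ :=
  Submodule.mul_eq_bot.not.2 (not_or.2 ⟨hM, hN⟩)

theorem Submodule.inf_ne_bot_of_isFractionRing {R F : Type*} [CommRing R] [Field F] [Algebra R F]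
    [IsFractionRing R F] {A B : Submodule R F} (hA : A ≠ ⊥) (hB : B ≠ ⊥) : A ⊓ B ≠ ⊥ := by
  obtain ⟨a, ha, ha0⟩ := Submodule.exists_mem_ne_zero_of_ne_bot hA
  obtain ⟨b, hb, hb0⟩ := Submodule.exists_mem_ne_zero_of_ne_bot hB
  have := (algebraMap R F).domain_nontrivial
  obtain ⟨p, q, hq, hpq⟩ := IsFractionRing.div_surjective (A := R) (a / b)
  have hq0 : algebraMap R F q ≠ 0 := IsFractionRing.to_map_ne_zero_of_mem_nonZeroDivisors hq
  have hqa : q • a = p • b := by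
    rw [div_eq_div_iff hq0 hb0] at hpq
    rw [Algebra.smul_def, Algebra.smul_def]
    linear_combination -hpq
  refine (Submodule.ne_bot_iff _).2 ⟨q • a, ⟨A.smul_mem q ha, hqa ▸ B.smul_mem p hb⟩, ?_⟩
  rw [Algebra.smul_def]
  exact mul_ne_zero hq0 ha0

theorem Polynomial.coeff_mem_of_coeffs_subset {R S : Type*} [Semiring R] [SetLike S R]
    [ZeroMemClass S R] {M : S} {p : R[X]} (h : (p.coeffs : Set R) ⊆ M) (n : ℕ) : p.coeff n ∈ M := by
  rcases eq_or_ne (p.coeff n) 0 with hn | hn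
  · rw [hn]
    exact zero_mem M
  · exact h (coeff_mem_coeffs hn)

namespace IsSemistarOp

variable {R F : Type*} [CommRing R] [Field F] [Algebra R F] {o : Submodule R F → Submodule R F}
  (h : IsSemistarOp R F o)
include h

theorem apply_smul {x : F} (hx : x ≠ 0) {E : Submodule R F} (hE : E ≠ ⊥) : o (x • E) = x • o E :=
  h.1 x hx E hE

theorem mono {E G : Submodule R F} (hE : E ≠ ⊥) (hG : G ≠ ⊥) (hEG : E ≤ G) : o E ≤ o G :=
  h.2.1 E G hE hG hEG

theorem le_apply {E : Submodule R F} (hE : E ≠ ⊥) : E ≤ o E := h.2.2.1 E hE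

theorem apply_apply {E : Submodule R F} (hE : E ≠ ⊥) : o (o E) = o E := h.2.2.2 E hE

theorem apply_ne_bot {E : Submodule R F} (hE : E ≠ ⊥) : o E ≠ ⊥ :=
  ne_bot_of_le_ne_bot hE (h.le_apply hE)

theorem one_mem_apply_one : (1 : F) ∈ o 1 :=
  h.le_apply Submodule.one_ne_bot (Submodule.mem_one.2 ⟨1, map_one _⟩)

theorem mul_mem_of_smul_le {c x : F} {E G : Submodule R F} (hE : E ≠ ⊥) (hG : G ≠ ⊥)
    (hcE : c • E ≤ G) (hx : x ∈ o E) : c * x ∈ o G := by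
  rcases eq_or_ne c 0 with rfl | hc
  · rw [zero_mul]
    exact zero_mem _
  refine h.mono (Submodule.pointwise_smul_ne_bot₀ hc hE) hG hcE ?_
  rw [h.apply_smul hc hE]
  exact Submodule.smul_mem_pointwise_smul x c _ hx

theorem mul_apply_le {M N : Submodule R F} (hM : M ≠ ⊥) (hN : N ≠ ⊥) : M * o N ≤ o (M * N) :=
  Submodule.mul_le.2 fun m hm _ hn => h.mul_mem_of_smul_le hN (Submodule.mul_ne_bot hM hN)
    (fun _ hy => by
      obtain ⟨n', hn', rfl⟩ := (Submodule.mem_smul_pointwise_iff_exists _ _ _).1 hy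
      exact Submodule.mul_mem_mul hm hn') hn

theorem apply_eq_apply_one_of_one_mem {M : Submodule R F} (hM : M ≠ ⊥) (hM1 : M ≤ 1)
    (hmem : (1 : F) ∈ o M) : o M = o 1 := by
  refine le_antisymm (h.mono hM Submodule.one_ne_bot hM1) ?_
  calc o 1 ≤ o (o M) := h.mono Submodule.one_ne_bot (h.apply_ne_bot hM) (Submodule.one_le.2 hmem)
    _ = o M := h.apply_apply hM

theorem apply_mul_eq_apply_one {M N : Submodule R F} (hM : M ≠ ⊥) (hN : N ≠ ⊥)
    (hM1 : M ≤ 1) (hN1 : N ≤ 1) (hMo : o M = o 1) (hNo : o N = o 1) : o (M * N) = o 1 := by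
  have hMN : M * N ≠ ⊥ := Submodule.mul_ne_bot hM hN
  refine le_antisymm (h.mono hMN Submodule.one_ne_bot (by simpa using mul_le_mul' hM1 hN1)) ?_
  have hM_le : M ≤ M * o N := fun m hm =>
    mul_one m ▸ Submodule.mul_mem_mul hm (hNo ▸ h.one_mem_apply_one)
  have hMoN : M * o N ≠ ⊥ := ne_bot_of_le_ne_bot hM hM_le
  calc o 1 = o M := hMo.symm
    _ ≤ o (M * o N) := h.mono hM hMoN hM_le
    _ ≤ o (o (M * N)) := h.mono hMoN (h.apply_ne_bot hMN) (h.mul_apply_le hM hN)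
    _ = o (M * N) := h.apply_apply hMN

end IsSemistarOp

section Colon

variable {R F : Type*} [CommRing R] [Field F] [Algebra R F]

theorem mem_idealSub {J : Ideal R} {x : F} : x ∈ idealSub R F J ↔ ∃ a ∈ J, algebraMap R F a = x :=
  Submodule.mem_map

theorem algebraMap_mem_idealSub {J : Ideal R} {a : R} (ha : a ∈ J) :
    algebraMap R F a ∈ idealSub R F J :=
  mem_idealSub.2 ⟨a, ha, rfl⟩

theorem idealSub_le_one (J : Ideal R) : idealSub R F J ≤ 1 := by
  rw [Submodule.one_eq_range, LinearMap.range_eq_map]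
  exact Submodule.map_mono le_top

theorem idealSub_top : idealSub R F ⊤ = 1 := by
  rw [Submodule.one_eq_range, idealSub, Submodule.map_top]

theorem idealSub_mono {I J : Ideal R} (h : I ≤ J) : idealSub R F I ≤ idealSub R F J :=
  Submodule.map_mono h

theorem idealSub_mul (I J : Ideal R) : idealSub R F (I * J) = idealSub R F I * idealSub R F J :=
  Submodule.map_mul I J (Algebra.ofId R F)

theorem idealSub_ne_bot (hinj : Function.Injective (algebraMap R F)) {J : Ideal R} (hJ : J ≠ ⊥) :
    idealSub R F J ≠ ⊥ := by
  obtain ⟨a, ha, ha0⟩ := Submodule.exists_mem_ne_zero_of_ne_bot hJ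
  exact (Submodule.ne_bot_iff _).2
    ⟨_, algebraMap_mem_idealSub ha, (map_ne_zero_iff _ hinj).2 ha0⟩

theorem ne_bot_of_idealSub_ne_bot {J : Ideal R} (hJ : idealSub R F J ≠ ⊥) : J ≠ ⊥ := by
  rintro rfl
  exact hJ (Submodule.map_bot _)

theorem mem_colonIdeal {E : Submodule R F} {J : Ideal R} {x : F} :
    x ∈ colonIdeal R F E J ↔ ∀ a ∈ J, a • x ∈ E := Iff.rfl

theorem colonIdeal_mono {E E' : Submodule R F} (h : E ≤ E') (J : Ideal R) :
    colonIdeal R F E J ≤ colonIdeal R F E' J := fun _ hx a ha => h (hx a ha)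

theorem colonIdeal_anti {J J' : Ideal R} (h : J' ≤ J) (E : Submodule R F) :
    colonIdeal R F E J ≤ colonIdeal R F E J' := fun _ hx a ha => hx a (h ha)

theorem le_colonIdeal (E : Submodule R F) (J : Ideal R) : E ≤ colonIdeal R F E J :=
  fun _ hx a _ => E.smul_mem a hx

theorem colonIdeal_smul {x : F} (hx : x ≠ 0) (E : Submodule R F) (J : Ideal R) :
    colonIdeal R F (x • E) J = x • colonIdeal R F E J := by
  ext y
  simp only [Submodule.mem_pointwise_smul_iff_inv_smul_mem₀ hx, mem_colonIdeal, smul_comm x⁻¹]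

theorem colonIdeal_inf (E G : Submodule R F) (J : Ideal R) :
    colonIdeal R F (E ⊓ G) J = colonIdeal R F E J ⊓ colonIdeal R F G J := by
  ext x
  simp only [mem_colonIdeal, Submodule.mem_inf, forall_and]

theorem mem_colonIdeal_span {s : Set R} {E : Submodule R F} {x : F} :
    x ∈ colonIdeal R F E (Ideal.span s) ↔ ∀ c ∈ s, c • x ∈ E := by
  refine ⟨fun h c hc => h c (Ideal.subset_span hc), fun h a ha => ?_⟩
  induction ha using Submodule.span_induction with
  | mem c hc => exact h c hc
  | zero => rw [zero_smul]; exact E.zero_mem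
  | add u v _ _ hu hv => rw [add_smul]; exact E.add_mem hu hv
  | smul r u _ hu => rw [smul_assoc]; exact E.smul_mem r hu

theorem mem_colonIdeal_span_iff_span_smul_le {s : Set R} {E : Submodule R F} {x : F} :
    x ∈ colonIdeal R F E (Ideal.span s) ↔ Submodule.span R ((· • x) '' s) ≤ E := by
  rw [mem_colonIdeal_span, Submodule.span_le, Set.image_subset_iff]
  rfl

theorem colonIdeal_mul (E : Submodule R F) (I J : Ideal R) :
    colonIdeal R F E (I * J) = colonIdeal R F (colonIdeal R F E J) I := by
  ext x
  refine ⟨fun hx a ha b hb => ?_, fun hx c hc => ?_⟩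
  · rw [smul_smul, mul_comm]
    exact hx _ (Ideal.mul_mem_mul ha hb)
  · refine Submodule.mul_induction_on hc (fun a ha b hb => ?_)
      fun u v hu hv => by rw [add_smul]; exact add_mem hu hv
    rw [mul_comm, ← smul_smul]
    exact hx a ha b hb

theorem inf_colonIdeal_le_colonIdeal_mul (E G : Submodule R F) (I J : Ideal R) :
    colonIdeal R F E I ⊓ colonIdeal R F G J ≤ colonIdeal R F (E ⊓ G) (I * J) := by
  rw [colonIdeal_mul, colonIdeal_inf, colonIdeal_inf]
  exact inf_le_inf (colonIdeal_mono (le_colonIdeal E J) I) (le_colonIdeal _ I)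

theorem colonIdeal_bot (hinj : Function.Injective (algebraMap R F)) {J : Ideal R} (hJ : J ≠ ⊥) :
    colonIdeal R F ⊥ J = ⊥ := by
  refine eq_bot_iff.2 fun x hx => ?_
  obtain ⟨a, ha, ha0⟩ := Submodule.exists_mem_ne_zero_of_ne_bot hJ
  have hax := (Submodule.mem_bot R).1 (hx a ha)
  rw [Algebra.smul_def] at hax
  exact (Submodule.mem_bot R).2
    ((mul_eq_zero.1 hax).resolve_left ((map_ne_zero_iff _ hinj).2 ha0))

end Colon

section FiniteType

variable {R F : Type*} [CommRing R] [Field F] [Algebra R F] {o o' : Submodule R F → Submodule R F}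

theorem le_finTypeFun {G E : Submodule R F} (hG : G ≠ ⊥) (hGfg : G.FG) (hGE : G ≤ E) :
    o G ≤ finTypeFun R F o E :=
  le_iSup₂_of_le G hG <| le_iSup₂_of_le hGfg hGE le_rfl

theorem finTypeFun_le_of {E M : Submodule R F}
    (h : ∀ G : Submodule R F, G ≠ ⊥ → G.FG → G ≤ E → o G ≤ M) : finTypeFun R F o E ≤ M :=
  iSup₂_le fun G hG => iSup₂_le fun hGfg hGE => h G hG hGfg hGE

theorem finTypeFun_eq_iSup (o : Submodule R F → Submodule R F) (E : Submodule R F) :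
    finTypeFun R F o E = ⨆ G : {G : Submodule R F // G ≠ ⊥ ∧ G.FG ∧ G ≤ E}, o G :=
  le_antisymm (finTypeFun_le_of fun G hG hGfg hGE => le_iSup_of_le ⟨G, hG, hGfg, hGE⟩ le_rfl)
    (iSup_le fun G => le_finTypeFun G.2.1 G.2.2.1 G.2.2.2)

theorem finTypeFun_mono {E E' : Submodule R F} (h : E ≤ E') :
    finTypeFun R F o E ≤ finTypeFun R F o E' :=
  finTypeFun_le_of fun _ hG hGfg hGE => le_finTypeFun hG hGfg (hGE.trans h)

theorem finTypeFun_le_finTypeFun_of_le (hle : ∀ E, E ≠ ⊥ → o E ≤ o' E) (E : Submodule R F) :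
    finTypeFun R F o E ≤ finTypeFun R F o' E :=
  finTypeFun_le_of fun G hG hGfg hGE => (hle G hG).trans (le_finTypeFun hG hGfg hGE)

theorem finTypeFun_finTypeFun (E : Submodule R F) :
    finTypeFun R F (finTypeFun R F o) E = finTypeFun R F o E :=
  le_antisymm (finTypeFun_le_of fun _ _ _ hGE => finTypeFun_mono hGE)
    (finTypeFun_le_of fun _ hG hGfg hGE =>
      (le_finTypeFun hG hGfg le_rfl).trans (le_finTypeFun hG hGfg hGE))

theorem IsFiniteTypeFun.congr (h : IsFiniteTypeFun R F o) (heq : ∀ E, E ≠ ⊥ → o' E = o E) :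
    IsFiniteTypeFun R F o' := fun E hE => by
  rw [heq E hE, h E hE]
  exact le_antisymm (finTypeFun_le_finTypeFun_of_le (fun G hG => (heq G hG).ge) E)
    (finTypeFun_le_finTypeFun_of_le (fun G hG => (heq G hG).le) E)

namespace IsSemistarOp

variable (h : IsSemistarOp R F o)
include h

theorem finTypeFun_le {E : Submodule R F} (hE : E ≠ ⊥) : finTypeFun R F o E ≤ o E :=
  finTypeFun_le_of fun _ hG _ hGE => h.mono hG hE hGE

theorem le_finTypeFun_self (E : Submodule R F) : E ≤ finTypeFun R F o E := by
  intro x hx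
  rcases eq_or_ne x 0 with rfl | hx0
  · exact zero_mem _
  have hxb : Submodule.span R {x} ≠ ⊥ := by simpa using hx0
  exact le_finTypeFun hxb (Submodule.fg_span_singleton x)
    ((Submodule.span_singleton_le_iff_mem _ _).2 hx)
    (h.le_apply hxb (Submodule.mem_span_singleton_self x))

theorem directed_finTypeFun (E : Submodule R F) :
    Directed (· ≤ ·) fun G : {G : Submodule R F // G ≠ ⊥ ∧ G.FG ∧ G ≤ E} => o G := by
  rintro ⟨G₁, hG₁, hG₁fg, hG₁E⟩ ⟨G₂, hG₂, hG₂fg, hG₂E⟩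
  have hsup : G₁ ⊔ G₂ ≠ ⊥ := ne_bot_of_le_ne_bot hG₁ le_sup_left
  exact ⟨⟨G₁ ⊔ G₂, hsup, hG₁fg.sup hG₂fg, sup_le hG₁E hG₂E⟩,
    h.mono hG₁ hsup le_sup_left, h.mono hG₂ hsup le_sup_right⟩

theorem finTypeFun_smul_le {x : F} (hx : x ≠ 0) (E : Submodule R F) :
    finTypeFun R F o (x • E) ≤ x • finTypeFun R F o E := by
  refine finTypeFun_le_of fun G hG hGfg hGE => ?_
  have hG' : x⁻¹ • G ≠ ⊥ := Submodule.pointwise_smul_ne_bot₀ (inv_ne_zero hx) hG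
  have hG'E : x⁻¹ • G ≤ E :=
    (Submodule.pointwise_smul_le_iff₀ (inv_ne_zero hx)).2 (by rwa [inv_inv])
  calc o G = x • o (x⁻¹ • G) := by rw [← h.apply_smul hx hG', smul_inv_smul₀ hx]
    _ ≤ x • finTypeFun R F o E :=
      smul_le_smul_left x (le_finTypeFun hG' (hGfg.pointwise_smul x⁻¹) hG'E)

theorem finTypeFun_smul {x : F} (hx : x ≠ 0) (E : Submodule R F) :
    finTypeFun R F o (x • E) = x • finTypeFun R F o E := by
  refine le_antisymm (h.finTypeFun_smul_le hx E) ?_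
  rw [Submodule.pointwise_smul_le_iff₀ hx]
  simpa only [inv_smul_smul₀ hx] using h.finTypeFun_smul_le (inv_ne_zero hx) (x • E)

theorem finTypeFun_finTypeFun_le {E : Submodule R F} (hE : E ≠ ⊥) :
    finTypeFun R F o (finTypeFun R F o E) ≤ finTypeFun R F o E := by
  refine finTypeFun_le_of fun G hG hGfg hGE => ?_
  have := Submodule.nonempty_fg_le_of_ne_bot hE
  obtain ⟨⟨G', hG', hG'fg, hG'E⟩, hGG'⟩ :=
    hGfg.exists_le_of_le_iSup (h.directed_finTypeFun E) (finTypeFun_eq_iSup o E ▸ hGE)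
  calc o G ≤ o (o G') := h.mono hG (h.apply_ne_bot hG') hGG'
    _ = o G' := h.apply_apply hG'
    _ ≤ finTypeFun R F o E := le_finTypeFun hG' hG'fg hG'E

end IsSemistarOp

theorem isSemistarOp_finTypeFun (h : IsSemistarOp R F o) : IsSemistarOp R F (finTypeFun R F o) :=
  ⟨fun _ hx E _ => h.finTypeFun_smul hx E, fun _ _ _ _ => finTypeFun_mono,
    fun E _ => h.le_finTypeFun_self E,
    fun _ hE => le_antisymm (h.finTypeFun_finTypeFun_le hE) (h.le_finTypeFun_self _)⟩

end FiniteType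

section Tilde

variable {R F : Type*} [CommRing R] [Field F] [Algebra R F] {o o' : Submodule R F → Submodule R F}

def IsTildeIdeal (o : Submodule R F → Submodule R F) (J : Ideal R) : Prop :=
  J ≠ ⊥ ∧ J.FG ∧ o (idealSub R F J) = o 1

theorem le_tildeFun {J : Ideal R} (hJ : IsTildeIdeal o J) (E : Submodule R F) :
    colonIdeal R F E J ≤ tildeFun R F o E :=
  le_iSup₂_of_le J hJ.1 <| le_iSup₂_of_le hJ.2.1 hJ.2.2 le_rfl

theorem tildeFun_le_of {E M : Submodule R F}
    (h : ∀ J : Ideal R, IsTildeIdeal o J → colonIdeal R F E J ≤ M) : tildeFun R F o E ≤ M :=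
  iSup₂_le fun J hJ => iSup₂_le fun hJfg hJo => h J ⟨hJ, hJfg, hJo⟩

theorem tildeFun_eq_iSup (o : Submodule R F → Submodule R F) (E : Submodule R F) :
    tildeFun R F o E = ⨆ J : {J : Ideal R // IsTildeIdeal o J}, colonIdeal R F E J :=
  le_antisymm (tildeFun_le_of fun J hJ => le_iSup_of_le ⟨J, hJ⟩ le_rfl)
    (iSup_le fun J => le_tildeFun J.2 E)

theorem tildeFun_mono {E E' : Submodule R F} (h : E ≤ E') :
    tildeFun R F o E ≤ tildeFun R F o E' :=
  tildeFun_le_of fun J hJ => (colonIdeal_mono h J).trans (le_tildeFun hJ E')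

theorem tildeFun_smul {x : F} (hx : x ≠ 0) (E : Submodule R F) :
    tildeFun R F o (x • E) = x • tildeFun R F o E := by
  rw [tildeFun_eq_iSup, tildeFun_eq_iSup, Submodule.smul_iSup']
  exact iSup_congr fun J => colonIdeal_smul hx E J

theorem isTildeIdeal_top : IsTildeIdeal o ⊤ :=
  ⟨ne_bot_of_idealSub_ne_bot (F := F) (by rw [idealSub_top]; exact Submodule.one_ne_bot),
    ⟨{1}, by simp⟩, by rw [idealSub_top]⟩

instance : Nonempty {J : Ideal R // IsTildeIdeal o J} := ⟨⟨⊤, isTildeIdeal_top⟩⟩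

theorem le_tildeFun_self (E : Submodule R F) : E ≤ tildeFun R F o E :=
  (le_colonIdeal E ⊤).trans (le_tildeFun isTildeIdeal_top E)

theorem tildeFun_le_tildeFun (h : ∀ J, IsTildeIdeal o J → IsTildeIdeal o' J) (E : Submodule R F) :
    tildeFun R F o E ≤ tildeFun R F o' E :=
  tildeFun_le_of fun J hJ => le_tildeFun (h J hJ) E

theorem IsTildeIdeal.one_mem (h : IsSemistarOp R F o) {J : Ideal R} (hJ : IsTildeIdeal o J) :
    (1 : F) ∈ o (idealSub R F J) :=
  hJ.2.2 ▸ h.one_mem_apply_one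

theorem isFiniteTypeFun_tildeFun (hinj : Function.Injective (algebraMap R F)) :
    IsFiniteTypeFun R F (tildeFun R F o) := by
  refine fun E _ => le_antisymm (tildeFun_le_of fun J hJ x hx => ?_)
    (finTypeFun_le_of fun _ _ _ hGE => tildeFun_mono hGE)
  obtain ⟨s, rfl⟩ := hJ.2.1
  set G := Submodule.span R ((· • x) '' (s : Set R))
  have hxG : x ∈ colonIdeal R F G (Ideal.span s) := mem_colonIdeal_span_iff_span_smul_le.2 le_rfl
  rcases eq_or_ne G ⊥ with hG | hG
  · rw [hG, colonIdeal_bot hinj hJ.1] at hxG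
    rw [(Submodule.mem_bot R).1 hxG]
    exact zero_mem _
  exact le_finTypeFun hG (Submodule.fg_span (s.finite_toSet.image _))
    (mem_colonIdeal_span_iff_span_smul_le.1 hx) (le_tildeFun hJ G hxG)

theorem IsStableFun.congr (h : IsStableFun R F o) (heq : ∀ E, E ≠ ⊥ → o' E = o E)
    (hinf : ∀ E G : Submodule R F, E ≠ ⊥ → G ≠ ⊥ → E ⊓ G ≠ ⊥) : IsStableFun R F o' :=
  fun E G hE hG => by rw [heq _ (hinf E G hE hG), heq E hE, heq G hG, h E G hE hG]

variable (hinj : Function.Injective (algebraMap R F))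
include hinj

theorem IsSemistarOp.isTildeIdeal_of_one_mem (h : IsSemistarOp R F o) {J : Ideal R} (hJ : J ≠ ⊥)
    (hJfg : J.FG) (h1 : (1 : F) ∈ o (idealSub R F J)) : IsTildeIdeal o J :=
  ⟨hJ, hJfg, h.apply_eq_apply_one_of_one_mem (idealSub_ne_bot hinj hJ) (idealSub_le_one J) h1⟩

theorem IsTildeIdeal.mul (h : IsSemistarOp R F o) {I J : Ideal R} (hI : IsTildeIdeal o I)
    (hJ : IsTildeIdeal o J) : IsTildeIdeal o (I * J) := by
  have hIb := idealSub_ne_bot hinj hI.1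
  have hJb := idealSub_ne_bot hinj hJ.1
  refine ⟨ne_bot_of_idealSub_ne_bot (F := F) ?_, hI.2.1.mul hJ.2.1, ?_⟩ <;> rw [idealSub_mul]
  · exact Submodule.mul_ne_bot hIb hJb
  · exact h.apply_mul_eq_apply_one hIb hJb (idealSub_le_one I) (idealSub_le_one J) hI.2.2 hJ.2.2

theorem directed_tildeFun (h : IsSemistarOp R F o) (E : Submodule R F) :
    Directed (· ≤ ·) fun J : {J : Ideal R // IsTildeIdeal o J} => colonIdeal R F E J := by
  rintro ⟨I, hI⟩ ⟨J, hJ⟩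
  exact ⟨⟨I * J, hI.mul hinj h hJ⟩,
    colonIdeal_anti Ideal.mul_le_left E, colonIdeal_anti Ideal.mul_le_right E⟩

theorem mem_tildeFun (h : IsSemistarOp R F o) {E : Submodule R F} {x : F} :
    x ∈ tildeFun R F o E ↔ ∃ J : Ideal R, IsTildeIdeal o J ∧ x ∈ colonIdeal R F E J := by
  rw [tildeFun_eq_iSup, Submodule.mem_iSup_of_directed _ (directed_tildeFun hinj h E)]
  exact ⟨fun ⟨J, hx⟩ => ⟨J, J.2, hx⟩, fun ⟨J, hJ, hx⟩ => ⟨⟨J, hJ⟩, hx⟩⟩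

theorem IsSemistarOp.tildeFun_le (h : IsSemistarOp R F o) {E : Submodule R F} (hE : E ≠ ⊥) :
    tildeFun R F o E ≤ o E := by
  refine tildeFun_le_of fun J hJ x hx => ?_
  rcases eq_or_ne x 0 with rfl | hx0
  · exact zero_mem _
  have hJb := idealSub_ne_bot hinj hJ.1
  have hxJ : x • idealSub R F J ≤ E := fun _ hy => by
    obtain ⟨_, hb, rfl⟩ := (Submodule.mem_smul_pointwise_iff_exists _ _ _).1 hy
    obtain ⟨a, ha, rfl⟩ := mem_idealSub.1 hb
    rw [smul_eq_mul, mul_comm, ← Algebra.smul_def]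
    exact hx a ha
  have hle := h.mono (Submodule.pointwise_smul_ne_bot₀ hx0 hJb) hE hxJ
  rw [h.apply_smul hx0 hJb, hJ.2.2] at hle
  exact hle (by simpa using Submodule.smul_mem_pointwise_smul _ x _ h.one_mem_apply_one)

theorem IsSemistarOp.tildeFun_tildeFun_le (h : IsSemistarOp R F o) (E : Submodule R F) :
    tildeFun R F o (tildeFun R F o E) ≤ tildeFun R F o E := by
  refine tildeFun_le_of fun I hI x hx => ?_
  obtain ⟨s, rfl⟩ := hI.2.1
  obtain ⟨⟨J, hJ⟩, hsJ⟩ := (Submodule.fg_span (s.finite_toSet.image (· • x))).exists_le_of_le_iSup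
    (directed_tildeFun hinj h E) (tildeFun_eq_iSup o E ▸ mem_colonIdeal_span_iff_span_smul_le.1 hx)
  refine le_tildeFun (hI.mul hinj h hJ) E ?_
  rw [colonIdeal_mul]
  exact mem_colonIdeal_span_iff_span_smul_le.2 hsJ

theorem isSemistarOp_tildeFun (h : IsSemistarOp R F o) : IsSemistarOp R F (tildeFun R F o) :=
  ⟨fun _ hx E _ => tildeFun_smul hx E, fun _ _ _ _ => tildeFun_mono,
    fun E _ => le_tildeFun_self E,
    fun E _ => le_antisymm (h.tildeFun_tildeFun_le hinj E) (le_tildeFun_self _)⟩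

theorem isStableFun_tildeFun (h : IsSemistarOp R F o) : IsStableFun R F (tildeFun R F o) := by
  refine fun E G _ _ =>
    le_antisymm (le_inf (tildeFun_mono inf_le_left) (tildeFun_mono inf_le_right)) ?_
  rintro x ⟨hxE, hxG⟩
  obtain ⟨I, hI, hxI⟩ := (mem_tildeFun hinj h).1 hxE
  obtain ⟨J, hJ, hxJ⟩ := (mem_tildeFun hinj h).1 hxG
  exact le_tildeFun (hI.mul hinj h hJ) _ (inf_colonIdeal_le_colonIdeal_mul E G I J ⟨hxI, hxJ⟩)

theorem IsTildeIdeal.to_tildeFun (h : IsSemistarOp R F o) {J : Ideal R} (hJ : IsTildeIdeal o J) :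
    IsTildeIdeal (tildeFun R F o) J := by
  refine (isSemistarOp_tildeFun hinj h).isTildeIdeal_of_one_mem hinj hJ.1 hJ.2.1
    (le_tildeFun hJ _ fun a ha => ?_)
  rw [Algebra.smul_def, mul_one]
  exact algebraMap_mem_idealSub ha

theorem IsTildeIdeal.exists_le_of_tildeFun (h : IsSemistarOp R F o) {J : Ideal R}
    (hJ : IsTildeIdeal (tildeFun R F o) J) : ∃ J₁ : Ideal R, IsTildeIdeal o J₁ ∧ J₁ ≤ J := by
  obtain ⟨J₁, hJ₁, hmem⟩ := (mem_tildeFun hinj h).1 (hJ.one_mem (isSemistarOp_tildeFun hinj h))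
  refine ⟨J₁, hJ₁, fun a ha => ?_⟩
  obtain ⟨b, hb, hba⟩ := mem_idealSub.1 (hmem a ha)
  rw [Algebra.smul_def, mul_one] at hba
  rwa [← hinj hba]

theorem tildeFun_tildeFun (h : IsSemistarOp R F o) (E : Submodule R F) :
    tildeFun R F (tildeFun R F o) E = tildeFun R F o E := by
  refine le_antisymm (tildeFun_le_of fun J hJ => ?_)
    (tildeFun_le_tildeFun (fun J hJ => hJ.to_tildeFun hinj h) E)
  obtain ⟨J₁, hJ₁, hle⟩ := hJ.exists_le_of_tildeFun hinj h
  exact (colonIdeal_anti hle E).trans (le_tildeFun hJ₁ E)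

theorem tildeFun_le_tildeFun_of_le (h : IsSemistarOp R F o) (h' : IsSemistarOp R F o')
    (hle : ∀ E, E ≠ ⊥ → o E ≤ o' E) (E : Submodule R F) :
    tildeFun R F o E ≤ tildeFun R F o' E :=
  tildeFun_le_tildeFun (fun _ hJ => h'.isTildeIdeal_of_one_mem hinj hJ.1 hJ.2.1
    (hle _ (idealSub_ne_bot hinj hJ.1) (hJ.one_mem h))) E

end Tilde

section Polynomial

variable {D K : Type*} [CommRing D] [Field K] [Algebra D K]

theorem algebraMap_polynomial_ratFunc (p : D[X]) :
    algebraMap D[X] (RatFunc K) p = algebraMap K[X] (RatFunc K) (p.map (algebraMap D K)) := rfl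

theorem algebraMap_ratFunc (x : K) :
    algebraMap K (RatFunc K) x = algebraMap K[X] (RatFunc K) (C x) := by
  rw [RatFunc.algebraMap_C, RatFunc.algebraMap_eq_C]

instance [IsFractionRing D K] : FaithfulSMul D[X] (RatFunc K) :=
  (faithfulSMul_iff_algebraMap_injective _ _).2 <|
    (IsFractionRing.injective K[X] (RatFunc K)).comp
      (Polynomial.map_injective _ (IsFractionRing.injective D K))

-- `K[X]` is the localization of `D[X]` at the nonzero constants.
instance [IsFractionRing D K] : IsFractionRing D[X] (RatFunc K) := by
  refine IsFractionRing.of_field _ _ fun z => ?_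
  let := Polynomial.algebra D K
  have := Polynomial.isLocalization (nonZeroDivisors D) K
  obtain ⟨f, g, -, rfl⟩ := IsFractionRing.div_surjective (A := K[X]) z
  obtain ⟨p, q, ⟨d, hd⟩, hf, hg⟩ :=
    IsLocalization.surj₂ ((nonZeroDivisors D).map C) K[X] f g
  have hd0 := (IsLocalization.map_units K[X] (⟨d, hd⟩ : (nonZeroDivisors D).map C)).ne_zero
  refine ⟨p, q, ?_⟩
  change _ = algebraMap K[X] (RatFunc K) (algebraMap D[X] K[X] p) /
    algebraMap K[X] (RatFunc K) (algebraMap D[X] K[X] q)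
  rw [← hf, ← hg, map_mul, map_mul, mul_div_mul_right]
  exact (map_ne_zero_iff _ (IsFractionRing.injective _ _)).2 hd0

theorem smul_algebraMap_ratFunc (q : D[X]) (x : K) :
    q • algebraMap K (RatFunc K) x =
      algebraMap K[X] (RatFunc K) (q.map (algebraMap D K) * C x) := by
  rw [Algebra.smul_def, algebraMap_polynomial_ratFunc, algebraMap_ratFunc, ← map_mul]

theorem algebraMap_ratFunc_smul (d : D) (x : K) :
    algebraMap K (RatFunc K) (d • x) = (C d : D[X]) • algebraMap K (RatFunc K) x := by
  rw [Algebra.smul_def d x, Algebra.smul_def (C d), map_mul, algebraMap_polynomial_ratFunc,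
    Polynomial.map_C, ← algebraMap_ratFunc]

theorem mem_polyExt {E : Submodule D K} {f : RatFunc K} :
    f ∈ polyExt D K E ↔ ∃ p : K[X], (∀ n, p.coeff n ∈ E) ∧ f = algebraMap K[X] (RatFunc K) p :=
  Iff.rfl

theorem algebraMap_mem_polyExt {E : Submodule D K} {x : K} (hx : x ∈ E) :
    algebraMap K (RatFunc K) x ∈ polyExt D K E :=
  ⟨C x, fun n => by rw [coeff_C]; split_ifs <;> simp [hx], algebraMap_ratFunc x⟩

theorem polyExt_mono {E G : Submodule D K} (h : E ≤ G) : polyExt D K E ≤ polyExt D K G := by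
  rintro f ⟨p, hp, rfl⟩
  exact ⟨p, fun n => h (hp n), rfl⟩

theorem polyExt_bot : polyExt D K ⊥ = ⊥ := by
  refine eq_bot_iff.2 ?_
  rintro f ⟨p, hp, rfl⟩
  rw [show p = 0 from Polynomial.ext fun n => by simpa using hp n, map_zero]
  exact zero_mem _

theorem polyExt_ne_bot {E : Submodule D K} (hE : E ≠ ⊥) : polyExt D K E ≠ ⊥ := by
  obtain ⟨x, hx, hx0⟩ := Submodule.exists_mem_ne_zero_of_ne_bot hE
  exact (Submodule.ne_bot_iff _).2 ⟨_, algebraMap_mem_polyExt hx, (_root_.map_ne_zero _).2 hx0⟩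

theorem mem_contractToBase {B : Submodule D[X] (RatFunc K)} {x : K} :
    x ∈ contractToBase D K B ↔ algebraMap K (RatFunc K) x ∈ B := Iff.rfl

theorem contractToBase_mono {A B : Submodule D[X] (RatFunc K)} (h : A ≤ B) :
    contractToBase D K A ≤ contractToBase D K B := fun _ hx => h hx

theorem contractToBase_polyExt (E : Submodule D K) : contractToBase D K (polyExt D K E) = E := by
  refine le_antisymm (fun x hx => ?_) fun x hx => algebraMap_mem_polyExt hx
  obtain ⟨p, hp, hxp⟩ := mem_polyExt.1 (mem_contractToBase.1 hx)
  rw [algebraMap_ratFunc] at hxp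
  obtain rfl := IsFractionRing.injective K[X] (RatFunc K) hxp
  simpa using hp 0

theorem contractToBase_iSup_of_directed {ι : Sort*} [Nonempty ι]
    {B : ι → Submodule D[X] (RatFunc K)}
    (hB : Directed (· ≤ ·) B) : contractToBase D K (⨆ i, B i) = ⨆ i, contractToBase D K (B i) := by
  refine le_antisymm (fun x hx => ?_) (iSup_le fun i => contractToBase_mono (le_iSup B i))
  obtain ⟨i, hi⟩ := (Submodule.mem_iSup_of_directed B hB).1 (mem_contractToBase.1 hx)
  exact le_iSup (fun i => contractToBase D K (B i)) i hi

theorem idealSub_map_C [IsFractionRing D K] (J : Ideal D) :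
    idealSub D[X] (RatFunc K) (J.map C) = polyExt D K (idealSub D K J) := by
  refine le_antisymm (fun f hf => ?_) ?_
  · obtain ⟨q, hq, rfl⟩ := mem_idealSub.1 hf
    refine ⟨q.map (algebraMap D K), fun n => ?_, rfl⟩
    rw [coeff_map]
    exact algebraMap_mem_idealSub (Ideal.mem_map_C_iff.1 hq n)
  · rintro f ⟨p, hp, rfl⟩
    obtain ⟨q, rfl⟩ := (mem_lifts p).1 <| (lifts_iff_coeff_lifts p).2 fun n => by
      obtain ⟨a, -, ha⟩ := mem_idealSub.1 (hp n)
      exact ⟨a, ha⟩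
    refine mem_idealSub.2 ⟨q, Ideal.mem_map_C_iff.2 fun n => ?_, rfl⟩
    obtain ⟨a, ha, hqa⟩ := mem_idealSub.1 (hp n)
    rw [coeff_map] at hqa
    rwa [← IsFractionRing.injective D K hqa]

theorem polyExt_span (s : Set K) :
    polyExt D K (Submodule.span D s) = Submodule.span D[X] (algebraMap K (RatFunc K) '' s) := by
  refine le_antisymm ?_ (Submodule.span_le.2 ?_)
  · have hspan : ∀ c ∈ Submodule.span D s,
        algebraMap K (RatFunc K) c ∈ Submodule.span D[X] (algebraMap K (RatFunc K) '' s) := by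
      intro c hc
      induction hc using Submodule.span_induction with
      | mem t ht => exact Submodule.subset_span (Set.mem_image_of_mem _ ht)
      | zero => rw [map_zero]; exact zero_mem _
      | add u v _ _ hu hv => rw [map_add]; exact add_mem hu hv
      | smul d c _ hc => rw [algebraMap_ratFunc_smul]; exact Submodule.smul_mem _ _ hc
    rintro f ⟨p, hp, rfl⟩
    rw [as_sum_support_C_mul_X_pow p, map_sum]
    refine Submodule.sum_mem _ fun n _ => ?_
    have hmon : algebraMap K[X] (RatFunc K) (C (p.coeff n) * X ^ n) =
        (X ^ n : D[X]) • algebraMap K (RatFunc K) (p.coeff n) := by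
      rw [smul_algebraMap_ratFunc, Polynomial.map_pow, Polynomial.map_X, mul_comm]
    rw [hmon]
    exact Submodule.smul_mem _ _ (hspan _ (hp n))
  · rintro _ ⟨t, ht, rfl⟩
    exact algebraMap_mem_polyExt (Submodule.subset_span ht)

theorem polyExt_fg {E : Submodule D K} (hE : E.FG) : (polyExt D K E).FG := by
  obtain ⟨s, rfl⟩ := hE
  rw [polyExt_span]
  exact Submodule.fg_span (s.finite_toSet.image _)

theorem exists_fg_le_polyExt {G : Submodule D[X] (RatFunc K)} {E : Submodule D K} (hG : G.FG)
    (hGE : G ≤ polyExt D K E) : ∃ E₀ : Submodule D K, E₀.FG ∧ E₀ ≤ E ∧ G ≤ polyExt D K E₀ := by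
  obtain ⟨s, rfl⟩ := hG
  induction s using Finset.induction_on with
  | empty => exact ⟨⊥, Submodule.fg_bot, bot_le, by simp⟩
  | insert g s _ ih =>
    rw [Finset.coe_insert, Submodule.span_insert] at hGE ⊢
    obtain ⟨E₁, hE₁fg, hE₁E, hsE₁⟩ := ih (le_sup_right.trans hGE)
    obtain ⟨p, hp, rfl⟩ :=
      mem_polyExt.1 (hGE (Submodule.mem_sup_left (Submodule.mem_span_singleton_self _)))
    refine ⟨Submodule.span D p.coeffs ⊔ E₁, (Submodule.fg_span p.coeffs.finite_toSet).sup hE₁fg,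
      sup_le ?_ hE₁E, sup_le ?_ (hsE₁.trans (polyExt_mono le_sup_right))⟩
    · rw [Submodule.span_le]
      intro c hc
      obtain ⟨n, -, rfl⟩ := mem_coeffs_iff.1 hc
      exact hp n
    · rw [Submodule.span_singleton_le_iff_mem]
      exact ⟨p, coeff_mem_of_coeffs_subset
        (Submodule.subset_span.trans (SetLike.coe_subset_coe.2 le_sup_left)), rfl⟩

theorem algebraMap_mem_colonIdeal_map_C {E : Submodule D K} {J : Ideal D} {x : K}
    (hx : x ∈ colonIdeal D K E J) :
    algebraMap K (RatFunc K) x ∈ colonIdeal D[X] (RatFunc K) (polyExt D K E) (J.map C) := by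
  intro q hq
  rw [smul_algebraMap_ratFunc]
  refine ⟨_, fun n => ?_, rfl⟩
  rw [coeff_mul_C, coeff_map, ← Algebra.smul_def]
  exact hx _ (Ideal.mem_map_C_iff.1 hq n)

-- `J₀` is generated by the coefficients of finitely many generators of `J`.
theorem exists_content_ideal {J : Ideal D[X]} (hJfg : J.FG) (hJ : J ≠ ⊥) :
    ∃ J₀ : Ideal D, J₀.FG ∧ J₀ ≠ ⊥ ∧ J ≤ J₀.map C ∧ ∀ (E : Submodule D K) (x : K),
      algebraMap K (RatFunc K) x ∈ colonIdeal D[X] (RatFunc K) (polyExt D K E) J →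
        x ∈ colonIdeal D K E J₀ := by
  obtain ⟨s, rfl⟩ := hJfg
  set J₀ : Ideal D := Ideal.span (s.biUnion coeffs : Set D)
  have hcoeffs : ∀ g ∈ s, (g.coeffs : Set D) ⊆ J₀ := fun g hg _ hc =>
    Ideal.subset_span (Finset.mem_coe.2 (Finset.mem_biUnion.2 ⟨g, hg, hc⟩))
  refine ⟨J₀, ⟨_, rfl⟩, ?_, Ideal.span_le.2 fun g hg => Ideal.mem_map_C_iff.2
    (coeff_mem_of_coeffs_subset (hcoeffs g hg)), fun E x hx => mem_colonIdeal_span.2 ?_⟩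
  · obtain ⟨g, hg, hg0⟩ : ∃ g ∈ s, g ≠ 0 := by
      by_contra! hs
      exact hJ (Submodule.span_eq_bot.2 hs)
    obtain ⟨c, hc⟩ := coeffs_nonempty_iff.2 hg0
    obtain ⟨n, hn, rfl⟩ := mem_coeffs_iff.1 hc
    exact (Submodule.ne_bot_iff _).2 ⟨_, hcoeffs g hg hc, mem_support_iff.1 hn⟩
  · intro c hc
    obtain ⟨g, hg, hcg⟩ := Finset.mem_biUnion.1 hc
    obtain ⟨n, -, rfl⟩ := mem_coeffs_iff.1 hcg
    obtain ⟨p, hp, hgp⟩ := hx g (Ideal.subset_span hg)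
    rw [smul_algebraMap_ratFunc] at hgp
    obtain rfl := IsFractionRing.injective K[X] (RatFunc K) hgp
    simpa [Algebra.smul_def] using hp n

theorem coeff_mem_contentOf {S : Set (RatFunc K)} {p : K[X]}
    (hp : algebraMap K[X] (RatFunc K) p ∈ S) (n : ℕ) : p.coeff n ∈ contentOf D K S :=
  Submodule.subset_span ⟨p, hp, n, rfl⟩

theorem contentOf_le {S : Set (RatFunc K)} {E : Submodule D K} (h : S ⊆ polyExt D K E) :
    contentOf D K S ≤ E := by
  refine Submodule.span_le.2 ?_
  rintro _ ⟨p, hpS, n, rfl⟩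
  obtain ⟨q, hq, hpq⟩ := h hpS
  rw [IsFractionRing.injective K[X] (RatFunc K) hpq]
  exact hq n

theorem contentOf_mono {S S' : Set (RatFunc K)} (h : S ⊆ S') :
    contentOf D K S ≤ contentOf D K S' :=
  Submodule.span_mono fun _ ⟨p, hp, n, hpn⟩ => ⟨p, h hp, n, hpn⟩

theorem contentOf_polyExt (E : Submodule D K) :
    contentOf D K (polyExt D K E : Set (RatFunc K)) = E :=
  le_antisymm (contentOf_le subset_rfl) fun x hx => by
    have hCx : algebraMap K[X] (RatFunc K) (C x) ∈ (polyExt D K E : Set (RatFunc K)) := by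
      rw [← algebraMap_ratFunc]
      exact algebraMap_mem_polyExt hx
    simpa using coeff_mem_contentOf (D := D) hCx 0

end Polynomial

section BigTri

variable {D K : Type*} [CommRing D] [Field K] [Algebra D K] {star : Submodule D K → Submodule D K}

def ClearsDenominators (A : Submodule D[X] (RatFunc K)) (z : RatFunc K) : Prop :=
  z ≠ 0 ∧ ∀ a ∈ A, z * a ∈ polyExt D K ⊤

theorem ClearsDenominators.mul_mem_polyExt_contentOf {A : Submodule D[X] (RatFunc K)}
    {z a : RatFunc K} (hz : ClearsDenominators A z) (ha : a ∈ A) :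
    z * a ∈ polyExt D K (contentOf D K (z • (A : Set (RatFunc K)))) := by
  obtain ⟨p, -, hp⟩ := hz.2 a ha
  exact ⟨p, coeff_mem_contentOf (hp ▸ Set.smul_mem_smul_set ha), hp⟩

theorem ClearsDenominators.contentOf_ne_bot {A : Submodule D[X] (RatFunc K)} {z : RatFunc K}
    (hz : ClearsDenominators A z) (hA : A ≠ ⊥) :
    contentOf D K (z • (A : Set (RatFunc K))) ≠ ⊥ := by
  obtain ⟨a, ha, ha0⟩ := Submodule.exists_mem_ne_zero_of_ne_bot hA
  intro hbot
  have hza := hz.mul_mem_polyExt_contentOf ha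
  rw [hbot, polyExt_bot] at hza
  exact mul_ne_zero hz.1 ha0 ((Submodule.mem_bot _).1 hza)

theorem ClearsDenominators.smul_iff {A : Submodule D[X] (RatFunc K)} {x z : RatFunc K}
    (hx : x ≠ 0) : ClearsDenominators (x • A) z ↔ ClearsDenominators A (z * x) := by
  refine and_congr (by simp [hx]) ⟨fun h a ha => ?_, fun h _ hb => ?_⟩
  · simpa [mul_assoc] using h _ (Submodule.smul_mem_pointwise_smul a x A ha)
  · obtain ⟨a, ha, rfl⟩ := (Submodule.mem_smul_pointwise_iff_exists _ _ _).1 hb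
    simpa [mul_assoc] using h a ha

theorem bigTri_le {A : Submodule D[X] (RatFunc K)} {z : RatFunc K} (hz : ClearsDenominators A z) :
    bigTri D K star A ≤ z⁻¹ • polyExt D K (star (contentOf D K (z • (A : Set (RatFunc K))))) := by
  rw [bigTri, bigTriT, Algebra.top_toSubmodule, if_pos ⟨z, hz⟩]
  exact iInf₂_le_of_le z hz.1 (iInf_le_of_le hz.2 le_rfl)

theorem le_bigTri {M A : Submodule D[X] (RatFunc K)} (h : ∀ z, ClearsDenominators A z →
      M ≤ z⁻¹ • polyExt D K (star (contentOf D K (z • (A : Set (RatFunc K)))))) :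
    M ≤ bigTri D K star A := by
  rw [bigTri, bigTriT, Algebra.top_toSubmodule]
  split_ifs
  · exact le_iInf₂ fun z hz => le_iInf fun hzA => h z ⟨hz, hzA⟩
  · exact le_top

theorem bigTri_smul_le (x : RatFunc K) (hx : x ≠ 0) (A : Submodule D[X] (RatFunc K)) :
    bigTri D K star (x • A) ≤ x • bigTri D K star A := by
  suffices x⁻¹ • bigTri D K star (x • A) ≤ bigTri D K star A by
    simpa using (Submodule.pointwise_smul_le_iff₀ (inv_ne_zero hx)).1 this
  refine le_bigTri fun z hz => ?_
  have hzx : ClearsDenominators (x • A) (z * x⁻¹) :=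
    (ClearsDenominators.smul_iff hx).2 (by rwa [mul_assoc, inv_mul_cancel₀ hx, mul_one])
  have hle := smul_le_smul_left x⁻¹ (bigTri_le (star := star) hzx)
  rwa [Submodule.coe_pointwise_smul, smul_smul, smul_smul, inv_mul_cancel_right₀ hx,
    show x⁻¹ * (z * x⁻¹)⁻¹ = z⁻¹ by field_simp] at hle

theorem bigTri_smul {x : RatFunc K} (hx : x ≠ 0) (A : Submodule D[X] (RatFunc K)) :
    bigTri D K star (x • A) = x • bigTri D K star A := by
  refine le_antisymm (bigTri_smul_le x hx A) ?_
  calc x • bigTri D K star A = x • bigTri D K star (x⁻¹ • x • A) := by rw [inv_smul_smul₀ hx]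
    _ ≤ x • x⁻¹ • bigTri D K star (x • A) :=
      smul_le_smul_left x (bigTri_smul_le _ (inv_ne_zero hx) _)
    _ = bigTri D K star (x • A) := smul_inv_smul₀ hx _

variable (hstar : IsSemistarOp D K star)
include hstar

theorem le_bigTri_self {A : Submodule D[X] (RatFunc K)} (hA : A ≠ ⊥) : A ≤ bigTri D K star A := by
  refine le_bigTri fun z hz => ?_
  rw [← Submodule.pointwise_smul_le_iff₀ hz.1]
  intro _ hy
  obtain ⟨a, ha, rfl⟩ := (Submodule.mem_smul_pointwise_iff_exists _ _ _).1 hy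
  exact polyExt_mono (hstar.le_apply (hz.contentOf_ne_bot hA)) (hz.mul_mem_polyExt_contentOf ha)

theorem bigTri_mono {A B : Submodule D[X] (RatFunc K)} (hA : A ≠ ⊥) (hAB : A ≤ B) :
    bigTri D K star A ≤ bigTri D K star B := by
  refine le_bigTri fun z hz => ?_
  have hzA : ClearsDenominators A z := ⟨hz.1, fun a ha => hz.2 a (hAB ha)⟩
  refine (bigTri_le hzA).trans (smul_le_smul_left _ (polyExt_mono ?_))
  exact hstar.mono (hzA.contentOf_ne_bot hA) (hz.contentOf_ne_bot (ne_bot_of_le_ne_bot hA hAB))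
    (contentOf_mono (Set.smul_set_mono hAB))

theorem bigTri_bigTri_le {A : Submodule D[X] (RatFunc K)} (hA : A ≠ ⊥) :
    bigTri D K star (bigTri D K star A) ≤ bigTri D K star A := by
  have hA' : bigTri D K star A ≠ ⊥ := ne_bot_of_le_ne_bot hA (le_bigTri_self hstar hA)
  refine le_bigTri fun z hz => ?_
  have hC := hz.contentOf_ne_bot hA
  have hmul : ∀ b ∈ bigTri D K star A,
      z * b ∈ polyExt D K (star (contentOf D K (z • (A : Set (RatFunc K))))) := fun b hb => by
    simpa [Submodule.mem_pointwise_smul_iff_inv_smul_mem₀ (inv_ne_zero hz.1)] using bigTri_le hz hb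
  have hzB : ClearsDenominators (bigTri D K star A) z :=
    ⟨hz.1, fun b hb => polyExt_mono le_top (hmul b hb)⟩
  refine (bigTri_le hzB).trans (smul_le_smul_left _ (polyExt_mono ?_))
  calc star (contentOf D K (z • (bigTri D K star A : Set (RatFunc K))))
      ≤ star (star (contentOf D K (z • (A : Set (RatFunc K))))) :=
        hstar.mono (hzB.contentOf_ne_bot hA') (hstar.apply_ne_bot hC) <| contentOf_le <| by
          rintro _ ⟨b, hb, rfl⟩
          exact hmul b hb
    _ = star (contentOf D K (z • (A : Set (RatFunc K)))) := hstar.apply_apply hC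

theorem isSemistarOp_bigTri : IsSemistarOp D[X] (RatFunc K) (bigTri D K star) :=
  ⟨fun _ hx A _ => bigTri_smul hx A, fun _ _ hA _ hAB => bigTri_mono hstar hA hAB,
    fun _ hA => le_bigTri_self hstar hA,
    fun _ hA => le_antisymm (bigTri_bigTri_le hstar hA) (le_bigTri_self hstar
      (ne_bot_of_le_ne_bot hA (le_bigTri_self hstar hA)))⟩

-- For a nonzero `e ∈ E` we get `z = p / e` with `p = z e ∈ K[X]`, so the content of `z E[X]`
-- contains `(p_n / e) E` for every coefficient `p_n` of `p`.
theorem ClearsDenominators.mul_algebraMap_mem {E : Submodule D K}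
    (hE : E ≠ ⊥) {z : RatFunc K} (hz : ClearsDenominators (polyExt D K E) z) {x : K}
    (hx : x ∈ star E) :
    z * algebraMap K (RatFunc K) x ∈
      polyExt D K (star (contentOf D K (z • (polyExt D K E : Set (RatFunc K))))) := by
  obtain ⟨e, he, he0⟩ := Submodule.exists_mem_ne_zero_of_ne_bot hE
  obtain ⟨p, -, hp⟩ := hz.2 _ (algebraMap_mem_polyExt he)
  have hzy : ∀ y : K,
      z * algebraMap K (RatFunc K) y = algebraMap K[X] (RatFunc K) (C (y / e) * p) := by
    intro y
    have he' : algebraMap K (RatFunc K) e ≠ 0 := (_root_.map_ne_zero _).2 he0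
    rw [map_mul, ← algebraMap_ratFunc, ← hp, map_div₀]
    field_simp
  have hcoeff : ∀ n,
      (p.coeff n / e) • E ≤ contentOf D K (z • (polyExt D K E : Set (RatFunc K))) := by
    intro n _ hw
    obtain ⟨y, hy, rfl⟩ := (Submodule.mem_smul_pointwise_iff_exists _ _ _).1 hw
    have hzy' := Set.smul_mem_smul_set (a := z) (algebraMap_mem_polyExt (D := D) hy)
    rw [smul_eq_mul, hzy y] at hzy'
    have hmem := coeff_mem_contentOf (D := D) hzy' n
    rw [coeff_C_mul] at hmem
    rwa [smul_eq_mul, show p.coeff n / e * y = y / e * p.coeff n by ring]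
  refine ⟨C (x / e) * p, fun n => ?_, hzy x⟩
  rw [coeff_C_mul, show x / e * p.coeff n = p.coeff n / e * x by ring]
  exact hstar.mul_mem_of_smul_le hE (hz.contentOf_ne_bot (polyExt_ne_bot hE)) (hcoeff n) hx

theorem isExtensionFun_bigTri : IsExtensionFun D K star (bigTri D K star) := by
  intro E hE
  refine le_antisymm (fun x hx => ?_) ?_
  · refine le_bigTri (M := Submodule.span D[X] {algebraMap K (RatFunc K) x}) (fun z hz => ?_)
      (Submodule.mem_span_singleton_self _)
    rw [Submodule.span_singleton_le_iff_mem,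
      Submodule.mem_pointwise_smul_iff_inv_smul_mem₀ (inv_ne_zero hz.1), inv_inv, smul_eq_mul]
    exact hz.mul_algebraMap_mem hstar hE hx
  · have h1 : ClearsDenominators (polyExt D K E) 1 :=
      ⟨one_ne_zero, fun a ha => by rw [one_mul]; exact polyExt_mono le_top ha⟩
    have hle := contractToBase_mono (bigTri_le (star := star) h1)
    rwa [inv_one, one_smul, one_smul, contentOf_polyExt, contractToBase_polyExt] at hle

end BigTri

section Curly

variable {D K : Type*} [CommRing D] [Field K] [Algebra D K] {star : Submodule D K → Submodule D K}
  {b : Submodule D[X] (RatFunc K) → Submodule D[X] (RatFunc K)}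

theorem curlyFun_le (hb : IsSemistarOp D[X] (RatFunc K) b) (hbe : IsExtensionFun D K star b)
    (A : Submodule D[X] (RatFunc K)) : curlyFun D K star A ≤ b A :=
  iInf₂_le_of_le b hb (iInf_le_of_le hbe le_rfl)

theorem le_curlyFun {M A : Submodule D[X] (RatFunc K)}
    (h : ∀ b, IsSemistarOp D[X] (RatFunc K) b → IsExtensionFun D K star b → M ≤ b A) :
    M ≤ curlyFun D K star A :=
  le_iInf₂ fun b hb => le_iInf fun hbe => h b hb hbe

theorem le_curlyFun_self {A : Submodule D[X] (RatFunc K)} (hA : A ≠ ⊥) : A ≤ curlyFun D K star A :=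
  le_curlyFun fun _ hb _ => hb.le_apply hA

theorem isSemistarOp_curlyFun : IsSemistarOp D[X] (RatFunc K) (curlyFun D K star) := by
  refine ⟨fun x hx A hA => ?_, fun A B hA hB hAB => le_curlyFun fun b hb hbe =>
    (curlyFun_le hb hbe A).trans (hb.mono hA hB hAB), fun _ hA => le_curlyFun_self hA,
    fun A hA => ?_⟩
  · simp only [curlyFun, Submodule.pointwise_smul_iInf₀ hx]
    exact iInf_congr fun b => iInf_congr fun hb => iInf_congr fun _ => hb.apply_smul hx hA
  · have hA' : curlyFun D K star A ≠ ⊥ := ne_bot_of_le_ne_bot hA (le_curlyFun_self hA)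
    refine le_antisymm (le_curlyFun fun b hb hbe => ?_) (le_curlyFun_self hA')
    calc curlyFun D K star (curlyFun D K star A) ≤ b (curlyFun D K star A) := curlyFun_le hb hbe _
      _ ≤ b (b A) := hb.mono hA' (hb.apply_ne_bot hA) (curlyFun_le hb hbe A)
      _ = b A := hb.apply_apply hA

theorem isExtensionFun_curlyFun (hstar : IsSemistarOp D K star) :
    IsExtensionFun D K star (curlyFun D K star) := by
  intro E hE
  refine le_antisymm (fun x hx => ?_) ?_
  · simp only [mem_contractToBase, curlyFun, Submodule.mem_iInf]
    exact fun b _ hbe => mem_contractToBase.1 (hbe E hE ▸ hx)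
  · exact (contractToBase_mono (curlyFun_le (isSemistarOp_bigTri hstar)
      (isExtensionFun_bigTri hstar) _)).trans_eq (isExtensionFun_bigTri hstar E hE).symm

theorem curlyFun_le_bigTri (hstar : IsSemistarOp D K star) (A : Submodule D[X] (RatFunc K)) :
    curlyFun D K star A ≤ bigTri D K star A :=
  curlyFun_le (isSemistarOp_bigTri hstar) (isExtensionFun_bigTri hstar) A

theorem IsExtensionFun.finTypeFun (hb : IsSemistarOp D[X] (RatFunc K) b)
    (hbe : IsExtensionFun D K star b) :
    IsExtensionFun D K (finTypeFun D K star) (finTypeFun D[X] (RatFunc K) b) := by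
  intro E hE
  have := Submodule.nonempty_fg_le_of_ne_bot (polyExt_ne_bot hE)
  rw [finTypeFun_eq_iSup b, contractToBase_iSup_of_directed (hb.directed_finTypeFun _)]
  refine le_antisymm (finTypeFun_le_of fun E₀ hE₀ hE₀fg hE₀E => ?_) (iSup_le fun G => ?_)
  · rw [hbe E₀ hE₀]
    exact le_iSup_of_le ⟨_, polyExt_ne_bot hE₀, polyExt_fg hE₀fg, polyExt_mono hE₀E⟩ le_rfl
  obtain ⟨G, hG, hGfg, hGE⟩ := G
  obtain ⟨E₀, hE₀fg, hE₀E, hGE₀⟩ := exists_fg_le_polyExt (D := D) (K := K) hGfg hGE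
  have hE₀ : E₀ ≠ ⊥ := by
    rintro rfl
    exact hG (eq_bot_iff.2 (polyExt_bot (D := D) (K := K) ▸ hGE₀))
  calc contractToBase D K (b G) ≤ contractToBase D K (b (polyExt D K E₀)) :=
        contractToBase_mono (hb.mono hG (polyExt_ne_bot hE₀) hGE₀)
    _ = star E₀ := (hbe E₀ hE₀).symm
    _ ≤ _root_.finTypeFun D K star E := le_finTypeFun hE₀ hE₀fg hE₀E

theorem isFiniteTypeFun_curlyFun_finTypeFun (hstar : IsSemistarOp D K star) :
    IsFiniteTypeFun D[X] (RatFunc K) (curlyFun D K (finTypeFun D K star)) := by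
  have hc : IsSemistarOp D[X] (RatFunc K) (curlyFun D K (finTypeFun D K star)) :=
    isSemistarOp_curlyFun
  have hext := (isExtensionFun_curlyFun (isSemistarOp_finTypeFun hstar)).finTypeFun hc
  exact fun A hA => le_antisymm (curlyFun_le (isSemistarOp_finTypeFun hc)
    (fun E hE => (finTypeFun_finTypeFun E).symm.trans (hext E hE)) A) (hc.finTypeFun_le hA)

theorem curlyFun_finTypeFun_le (hstar : IsSemistarOp D K star) (A : Submodule D[X] (RatFunc K)) :
    curlyFun D K (finTypeFun D K star) A ≤ finTypeFun D[X] (RatFunc K) (curlyFun D K star) A :=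
  curlyFun_le (isSemistarOp_finTypeFun isSemistarOp_curlyFun)
    ((isExtensionFun_curlyFun hstar).finTypeFun isSemistarOp_curlyFun) A

variable [IsFractionRing D K]

theorem IsExtensionFun.isTildeIdeal_map_C (hstar : IsSemistarOp D K star)
    (hb : IsSemistarOp D[X] (RatFunc K) b) (hbe : IsExtensionFun D K star b) {J : Ideal D}
    (hJ : IsTildeIdeal star J) : IsTildeIdeal b (J.map C) := by
  have hJb := idealSub_ne_bot (IsFractionRing.injective D K) hJ.1
  have hJCb : J.map C ≠ ⊥ :=
    ne_bot_of_idealSub_ne_bot (F := RatFunc K) (by rw [idealSub_map_C]; exact polyExt_ne_bot hJb)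
  refine hb.isTildeIdeal_of_one_mem (IsFractionRing.injective _ _) hJCb (hJ.2.1.map _) ?_
  rw [idealSub_map_C, ← map_one (algebraMap K (RatFunc K)), ← mem_contractToBase, ← hbe _ hJb]
  exact hJ.one_mem hstar

theorem IsExtensionFun.tildeFun (hstar : IsSemistarOp D K star)
    (hb : IsSemistarOp D[X] (RatFunc K) b) (hbe : IsExtensionFun D K star b) :
    IsExtensionFun D K (tildeFun D K star) (tildeFun D[X] (RatFunc K) b) := by
  intro E hE
  refine le_antisymm (tildeFun_le_of fun J hJ x hx => ?_) fun x hx => ?_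
  · exact le_tildeFun (hbe.isTildeIdeal_map_C hstar hb hJ) _ (algebraMap_mem_colonIdeal_map_C hx)
  obtain ⟨J, hJ, hxJ⟩ := (mem_tildeFun (IsFractionRing.injective _ _) hb).1 hx
  obtain ⟨J₀, hJ₀fg, hJ₀, hJJ₀, hcolon⟩ := exists_content_ideal (K := K) hJ.2.1 hJ.1
  have hJ₀b := idealSub_ne_bot (IsFractionRing.injective D K) hJ₀
  refine le_tildeFun (hstar.isTildeIdeal_of_one_mem (IsFractionRing.injective D K) hJ₀ hJ₀fg ?_) E
    (hcolon E x hxJ)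
  rw [hbe _ hJ₀b, mem_contractToBase, map_one]
  exact hb.mono (idealSub_ne_bot (IsFractionRing.injective _ _) hJ.1) (polyExt_ne_bot hJ₀b)
    (idealSub_map_C (K := K) J₀ ▸ idealSub_mono hJJ₀) (hJ.one_mem hb)

theorem curlyFun_tildeFun_eq (hstar : IsSemistarOp D K star) {A : Submodule D[X] (RatFunc K)}
    (hA : A ≠ ⊥) : curlyFun D K (tildeFun D K star) A =
      tildeFun D[X] (RatFunc K) (curlyFun D K (tildeFun D K star)) A := by
  have hinj := IsFractionRing.injective D[X] (RatFunc K)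
  have ht := isSemistarOp_tildeFun (IsFractionRing.injective D K) hstar
  have hc : IsSemistarOp D[X] (RatFunc K) (curlyFun D K (tildeFun D K star)) :=
    isSemistarOp_curlyFun
  have hext := (isExtensionFun_curlyFun ht).tildeFun ht hc
  refine le_antisymm (curlyFun_le (isSemistarOp_tildeFun hinj hc) (fun E hE => ?_) A)
    (hc.tildeFun_le hinj hA)
  exact (tildeFun_tildeFun (IsFractionRing.injective D K) hstar E).symm.trans (hext E hE)

theorem curlyFun_tildeFun_le_curlyFun (hstar : IsSemistarOp D K star)
    {A : Submodule D[X] (RatFunc K)} (hA : A ≠ ⊥) :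
    curlyFun D K (tildeFun D K star) A ≤ curlyFun D K star A :=
  le_curlyFun fun _ hb hbe =>
    (curlyFun_le (isSemistarOp_tildeFun (IsFractionRing.injective _ _) hb)
      (hbe.tildeFun hstar hb) A).trans (hb.tildeFun_le (IsFractionRing.injective _ _) hA)

end Curly

theorem curly_finType_and_tilde_general (D K : Type*) [CommRing D] [Field K] [Algebra D K] [IsFractionRing D K]
    (star : Submodule D K → Submodule D K) (hstar : IsSemistarOp D K star) :
    (IsFiniteTypeFun (Polynomial D) (RatFunc K) (curlyFun D K (finTypeFun D K star)) ∧
      ∀ A : Submodule (Polynomial D) (RatFunc K), A ≠ ⊥ →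
        curlyFun D K (finTypeFun D K star) A ≤
          finTypeFun (Polynomial D) (RatFunc K) (curlyFun D K star) A ∧
        finTypeFun (Polynomial D) (RatFunc K) (curlyFun D K star) A ≤
          finTypeFun (Polynomial D) (RatFunc K) (bigTri D K star) A) ∧
    (IsStableFun (Polynomial D) (RatFunc K) (curlyFun D K (tildeFun D K star)) ∧
      IsFiniteTypeFun (Polynomial D) (RatFunc K) (curlyFun D K (tildeFun D K star)) ∧
      ∀ A : Submodule (Polynomial D) (RatFunc K), A ≠ ⊥ →
        curlyFun D K (tildeFun D K star) A =
          tildeFun (Polynomial D) (RatFunc K) (curlyFun D K (tildeFun D K star)) A ∧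
        tildeFun (Polynomial D) (RatFunc K) (curlyFun D K (tildeFun D K star)) A ≤
          tildeFun (Polynomial D) (RatFunc K) (curlyFun D K star) A ∧
        tildeFun (Polynomial D) (RatFunc K) (curlyFun D K star) A ≤
          tildeFun (Polynomial D) (RatFunc K) (bigTri D K star) A) := by
  have hinj := IsFractionRing.injective D[X] (RatFunc K)
  have hC : IsSemistarOp D[X] (RatFunc K) (curlyFun D K star) := isSemistarOp_curlyFun
  have hCt : IsSemistarOp D[X] (RatFunc K) (curlyFun D K (tildeFun D K star)) :=
    isSemistarOp_curlyFun
  have heq : ∀ A, A ≠ ⊥ → curlyFun D K (tildeFun D K star) A =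
      tildeFun D[X] (RatFunc K) (curlyFun D K (tildeFun D K star)) A :=
    fun _ hA => curlyFun_tildeFun_eq hstar hA
  refine ⟨⟨isFiniteTypeFun_curlyFun_finTypeFun hstar, fun A _ => ⟨curlyFun_finTypeFun_le hstar A,
      finTypeFun_le_finTypeFun_of_le (fun B _ => curlyFun_le_bigTri hstar B) A⟩⟩,
    (isStableFun_tildeFun hinj hCt).congr heq fun _ _ => Submodule.inf_ne_bot_of_isFractionRing,
    (isFiniteTypeFun_tildeFun hinj).congr heq, fun A hA => ⟨heq A hA, ?_, ?_⟩⟩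
  · exact tildeFun_le_tildeFun_of_le hinj hCt hC
      (fun _ hB => curlyFun_tildeFun_le_curlyFun hstar hB) A
  · exact tildeFun_le_tildeFun_of_le hinj hC (isSemistarOp_bigTri hstar)
      (fun B _ => curlyFun_le_bigTri hstar B) A

theorem curly_finType_and_tilde (D K : Type*) [CommRing D] [IsDomain D] [Field K] [Algebra D K] [IsFractionRing D K]
    (star : Submodule D K → Submodule D K) (hstar : IsSemistarOp D K star) :
    (IsFiniteTypeFun (Polynomial D) (RatFunc K) (curlyFun D K (finTypeFun D K star)) ∧
      ∀ A : Submodule (Polynomial D) (RatFunc K), A ≠ ⊥ →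
        curlyFun D K (finTypeFun D K star) A ≤
          finTypeFun (Polynomial D) (RatFunc K) (curlyFun D K star) A ∧
        finTypeFun (Polynomial D) (RatFunc K) (curlyFun D K star) A ≤
          finTypeFun (Polynomial D) (RatFunc K) (bigTri D K star) A) ∧
    (IsStableFun (Polynomial D) (RatFunc K) (curlyFun D K (tildeFun D K star)) ∧
      IsFiniteTypeFun (Polynomial D) (RatFunc K) (curlyFun D K (tildeFun D K star)) ∧
      ∀ A : Submodule (Polynomial D) (RatFunc K), A ≠ ⊥ →
        curlyFun D K (tildeFun D K star) A =
          tildeFun (Polynomial D) (RatFunc K) (curlyFun D K (tildeFun D K star)) A ∧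
        tildeFun (Polynomial D) (RatFunc K) (curlyFun D K (tildeFun D K star)) A ≤
          tildeFun (Polynomial D) (RatFunc K) (curlyFun D K star) A ∧
        tildeFun (Polynomial D) (RatFunc K) (curlyFun D K star) A ≤
          tildeFun (Polynomial D) (RatFunc K) (bigTri D K star) A) :=
  curly_finType_and_tilde_general D K star hstar
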